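/- Let C be a coalgebra over a field k and R a commutative k-algebra. A linear map μ : C → R is lazy if and only if μ vanishes on the subspace I₁(C). Consequently, composition with the quotient map π : C → C/I₁(C) gives a bijection between linear maps C/I₁(C) → R and lazy linear maps C → R, which restricts to a group isomorphism Reg(C/I₁(C), R) ≅ Reg_ℓ(C,R) between convolution-invertible maps on the quotient and convolution-invertible lazy maps on C. -/

import Mathlib

open TensorProduct

/-- `I₁(C)`: the subspace of a coalgebra `C` spanned by the elements
`φ(x₁)·x₂ − φ(x₂)·x₁` for `x ∈ C` and linear forms `φ : C → k`. -/
noncomputable def lazySubspace (k : Type*) [Field k] (C : Type*)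
    [AddCommGroup C] [Module k C] [Coalgebra k C] : Submodule k C :=
  Submodule.span k {y : C | ∃ (x : C) (φ : C →ₗ[k] k),
    y = (TensorProduct.lid k C)
          (TensorProduct.map φ LinearMap.id (Coalgebra.comul x))
      - (TensorProduct.rid k C)
          (TensorProduct.map LinearMap.id φ (Coalgebra.comul x))}

/-- The convolution product `f * g = μ_R ∘ (f ⊗ g) ∘ Δ_D`. -/
noncomputable def conv (k : Type*) [Field k] {D R : Type*}
    [AddCommGroup D] [Module k D] [CoalgebraStruct k D]
    [CommRing R] [Algebra k R] (f g : D →ₗ[k] R) : D →ₗ[k] R :=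
  LinearMap.mul' k R ∘ₗ TensorProduct.map f g ∘ₗ Coalgebra.comul

/-- The unit `η_R ∘ ε_D` of the convolution monoid. -/
noncomputable def convUnit (k : Type*) [Field k] (D : Type*) (R : Type*)
    [AddCommGroup D] [Module k D] [CoalgebraStruct k D]
    [CommRing R] [Algebra k R] : D →ₗ[k] R :=
  Algebra.linearMap k R ∘ₗ Coalgebra.counit

/-- Convolution invertibility. -/
noncomputable def IsConvInvertible (k : Type*) [Field k] {D R : Type*}
    [AddCommGroup D] [Module k D] [CoalgebraStruct k D]
    [CommRing R] [Algebra k R] (f : D →ₗ[k] R) : Prop :=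
  ∃ g : D →ₗ[k] R, conv k f g = convUnit k D R ∧ conv k g f = convUnit k D R

/-- A linear map `μ : C → R` is lazy if `μ(x₁) ⊗ x₂ = μ(x₂) ⊗ x₁` in `R ⊗ C`
for all `x ∈ C`. -/
noncomputable def IsLazy (k : Type*) [Field k] {C R : Type*}
    [AddCommGroup C] [Module k C] [Coalgebra k C]
    [CommRing R] [Algebra k R] (μ : C →ₗ[k] R) : Prop :=
  ∀ x : C,
    TensorProduct.map μ (LinearMap.id : C →ₗ[k] C) (Coalgebra.comul x)
      = TensorProduct.map μ (LinearMap.id : C →ₗ[k] C)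
          ((TensorProduct.comm k C C) (Coalgebra.comul x))

/-!
Since linear forms on `C` separate the points of `R ⊗ C`, laziness of `μ`, i.e.
`μ(x₁) ⊗ x₂ = μ(x₂) ⊗ x₁`, amounts to `μ(x₁ φ(x₂)) = μ(φ(x₁) x₂)` for all `φ ∈ C*`, that is,
to `μ` vanishing on the generators of `I₁(C)`. These two expressions are the convolution
products `μ * φ` and `φ * μ`, and a lazy map commutes with every map because `R` is commutative;
hence the lazy maps are exactly the central elements of the convolution algebra `Hom(C, R)`.
Precomposition with the coalgebra projection `π : C → C/I₁(C)` is an injective monoid morphism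
onto these central elements. The inverse of a central unit is central, so precomposition with
`π` also reflects units, which gives `Reg(C/I₁(C), R) ≅ Reg_ℓ(C, R)`.
-/

open WithConv

theorem TensorProduct.ext_of_forall_rid_lTensor {k M N : Type*} [CommSemiring k]
    [AddCommMonoid M] [Module k M] [AddCommMonoid N] [Module k N] [Module.Free k N]
    {s t : M ⊗[k] N}
    (h : ∀ ψ : N →ₗ[k] k, TensorProduct.rid k M (ψ.lTensor M s)
      = TensorProduct.rid k M (ψ.lTensor M t)) : s = t := by
  classical
  let b := Module.Free.chooseBasis k N
  exact (equivFinsuppOfBasisRight b).injective <| Finsupp.ext fun i => by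
    simp only [equivFinsuppOfBasisRight_apply, h]

section Slices

variable {k M N P : Type*} [CommSemiring k] [AddCommMonoid M] [Module k M]
  [AddCommMonoid N] [Module k N] [AddCommMonoid P] [Module k P]

lemma rid_lTensor_map_id (μ : M →ₗ[k] N) (ψ : P →ₗ[k] k) (t : M ⊗[k] P) :
    TensorProduct.rid k N (ψ.lTensor N (map μ LinearMap.id t))
      = μ (TensorProduct.rid k M (map LinearMap.id ψ t)) := by
  induction t using TensorProduct.induction_on <;> simp_all

lemma rid_lTensor_map_id_comm (μ : M →ₗ[k] N) (ψ : P →ₗ[k] k) (t : P ⊗[k] M) :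
    TensorProduct.rid k N (ψ.lTensor N (map μ LinearMap.id (TensorProduct.comm k P M t)))
      = μ (TensorProduct.lid k M (map ψ LinearMap.id t)) := by
  induction t using TensorProduct.induction_on <;> simp_all

end Slices

section Lazy

variable {k C R : Type*} [Field k] [AddCommGroup C] [Module k C] [Coalgebra k C]
  [CommRing R] [Algebra k R]

lemma conv_eq_convMul (f g : C →ₗ[k] R) : conv k f g = (toConv f * toConv g).ofConv := rfl

lemma convUnit_eq_one : convUnit k C R = (1 : WithConv (C →ₗ[k] R)).ofConv := rfl

lemma isConvInvertible_iff_isUnit (f : C →ₗ[k] R) :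
    IsConvInvertible k f ↔ IsUnit (toConv f) := by
  rw [isUnit_iff_exists, (WithConv.equiv _).exists_congr_left]
  simp [IsConvInvertible, conv_eq_convMul, convUnit_eq_one, ← ofConv_injective.eq_iff]

theorem isLazy_iff_forall_dual (μ : C →ₗ[k] R) :
    IsLazy k μ ↔ ∀ (x : C) (ψ : C →ₗ[k] k),
      μ (TensorProduct.lid k C (map ψ LinearMap.id (Coalgebra.comul x)))
        = μ (TensorProduct.rid k C (map LinearMap.id ψ (Coalgebra.comul x))) := by
  refine forall_congr' fun x => ⟨fun h ψ => ?_, fun h => ?_⟩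
  · rw [← rid_lTensor_map_id, ← rid_lTensor_map_id_comm, h]
  · exact TensorProduct.ext_of_forall_rid_lTensor fun ψ => by
      rw [rid_lTensor_map_id, rid_lTensor_map_id_comm, h]

theorem isLazy_iff_lazySubspace_le_ker (μ : C →ₗ[k] R) :
    IsLazy k μ ↔ lazySubspace k C ≤ LinearMap.ker μ := by
  rw [isLazy_iff_forall_dual, lazySubspace, Submodule.span_le]
  constructor
  · rintro h _ ⟨x, ψ, rfl⟩
    simp [h x ψ]
  · intro h x ψ
    simpa [sub_eq_zero] using h ⟨x, ψ, rfl⟩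

lemma convMul_algebraMap_comp_apply (μ : C →ₗ[k] R) (ψ : C →ₗ[k] k) (x : C) :
    (toConv μ * toConv (Algebra.linearMap k R ∘ₗ ψ)) x
      = μ (TensorProduct.rid k C (map LinearMap.id ψ (Coalgebra.comul x))) := by
  rw [LinearMap.convMul_apply]
  induction Coalgebra.comul (R := k) x using TensorProduct.induction_on <;>
    simp_all [Algebra.smul_def, mul_comm]

lemma algebraMap_comp_convMul_apply (μ : C →ₗ[k] R) (ψ : C →ₗ[k] k) (x : C) :
    (toConv (Algebra.linearMap k R ∘ₗ ψ) * toConv μ) x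
      = μ (TensorProduct.lid k C (map ψ LinearMap.id (Coalgebra.comul x))) := by
  rw [LinearMap.convMul_apply]
  induction Coalgebra.comul (R := k) x using TensorProduct.induction_on <;>
    simp_all [Algebra.smul_def]

theorem IsLazy.commute {μ : C →ₗ[k] R} (hμ : IsLazy k μ) (f : WithConv (C →ₗ[k] R)) :
    Commute (toConv μ) f := by
  ext x
  have factor (s : C ⊗[k] C) :
      map μ f.ofConv s = map LinearMap.id f.ofConv (map μ LinearMap.id s) := by
    rw [map_map, LinearMap.id_comp, LinearMap.comp_id]
  rw [LinearMap.convMul_apply, LinearMap.convMul_apply,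
    ← LinearMap.mul'_comm (map f.ofConv _ _), ← map_comm, ofConv_toConv, factor, factor, hμ x]

theorem isLazy_iff_forall_commute (μ : C →ₗ[k] R) :
    IsLazy k μ ↔ ∀ f, Commute (toConv μ) f := by
  refine ⟨IsLazy.commute, fun h => (isLazy_iff_forall_dual μ).2 fun x ψ => ?_⟩
  rw [← convMul_algebraMap_comp_apply, ← algebraMap_comp_convMul_apply, (h _).eq]

theorem isLazy_comp {D : Type*} [AddCommGroup D] [Module k D] {π : C →ₗ[k] D}
    (hπ : lazySubspace k C ≤ LinearMap.ker π) (ν : D →ₗ[k] R) : IsLazy k (ν ∘ₗ π) :=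
  (isLazy_iff_lazySubspace_le_ker _).2 (hπ.trans (LinearMap.ker_le_ker_comp π ν))

theorem IsLazy.exists_comp_eq {D : Type*} [AddCommGroup D] [Module k D] {π : C →ₗ[k] D}
    (hπ : Function.Surjective π) (hker : LinearMap.ker π ≤ lazySubspace k C)
    {μ : C →ₗ[k] R} (hμ : IsLazy k μ) : ∃ ν : D →ₗ[k] R, ν ∘ₗ π = μ := by
  refine ⟨(LinearMap.ker π).liftQ μ (hker.trans ((isLazy_iff_lazySubspace_le_ker μ).1 hμ)) ∘ₗ
    (π.quotKerEquivOfSurjective hπ).symm.toLinearMap, LinearMap.ext fun x => ?_⟩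
  simp

end Lazy

section Precomposition

variable {k C D : Type*} (R : Type*) [CommSemiring k] [AddCommMonoid C] [Module k C]
  [Coalgebra k C] [AddCommMonoid D] [Module k D] [Coalgebra k D] [Semiring R] [Algebra k R]

def CoalgHom.precompConv (π : C →ₗc[k] D) : WithConv (D →ₗ[k] R) →* WithConv (C →ₗ[k] R) where
  toFun ν := toConv (ν.ofConv ∘ₗ π)
  map_one' := by ext x; simp [CoalgHomClass.counit_comp_apply]
  map_mul' ν ν' := by ext1; exact LinearMap.convMul_comp_coalgHom_distrib ν ν' π

variable {R}

lemma CoalgHom.precompConv_injective {π : C →ₗc[k] D} (hπ : Function.Surjective π) :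
    Function.Injective (π.precompConv R) := fun _ _ h =>
  ofConv_injective ((LinearMap.cancel_right hπ).1 (congrArg ofConv h))

end Precomposition

theorem CoalgHom.isLocalHom_precompConv {k C D R : Type*} [Field k] [AddCommGroup C]
    [Module k C] [Coalgebra k C] [AddCommGroup D] [Module k D] [Coalgebra k D] [CommRing R]
    [Algebra k R] {π : C →ₗc[k] D} (hπ : Function.Surjective π)
    (hker : LinearMap.ker (π : C →ₗ[k] D) = lazySubspace k C) :
    IsLocalHom (π.precompConv R) := by
  refine ⟨fun ν ⟨u, hu⟩ => ?_⟩
  have hcentral (f : WithConv (C →ₗ[k] R)) : Commute (↑u) f := by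
    rw [hu]
    exact (isLazy_comp hker.ge ν.ofConv).commute f
  have hinv : IsLazy k (↑u⁻¹ : WithConv (C →ₗ[k] R)).ofConv :=
    (isLazy_iff_forall_commute _).2 fun f => (hcentral f).units_inv_left
  obtain ⟨ν', hν'⟩ := hinv.exists_comp_eq hπ hker.le
  replace hν' : π.precompConv R (toConv ν') = ↑u⁻¹ := congrArg toConv hν'
  refine isUnit_iff_exists.2 ⟨toConv ν', precompConv_injective hπ ?_, precompConv_injective hπ ?_⟩
    <;> simp [hν', ← hu]

theorem lazy_iff_vanishes_on_lazySubspace_and_reg_iso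
    (k : Type*) [Field k] (C : Type*)
    [AddCommGroup C] [Module k C] [Coalgebra k C]
    (R : Type*) [CommRing R] [Algebra k R]
    [Coalgebra k (C ⧸ lazySubspace k C)]
    (hcomul : ∀ x : C,
      Coalgebra.comul (R := k) ((lazySubspace k C).mkQ x)
        = TensorProduct.map (lazySubspace k C).mkQ (lazySubspace k C).mkQ
            (Coalgebra.comul (R := k) x))
    (hcounit : ∀ x : C,
      Coalgebra.counit (R := k) ((lazySubspace k C).mkQ x)
        = Coalgebra.counit (R := k) x) :
    (∀ μ : C →ₗ[k] R, IsLazy k μ ↔ ∀ y ∈ lazySubspace k C, μ y = 0) ∧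
    Function.Injective
      (fun ν : (C ⧸ lazySubspace k C) →ₗ[k] R => ν ∘ₗ (lazySubspace k C).mkQ) ∧
    (∀ ν : (C ⧸ lazySubspace k C) →ₗ[k] R,
      IsLazy k (ν ∘ₗ (lazySubspace k C).mkQ)) ∧
    (∀ μ : C →ₗ[k] R, IsLazy k μ →
      ∃ ν : (C ⧸ lazySubspace k C) →ₗ[k] R, ν ∘ₗ (lazySubspace k C).mkQ = μ) ∧
    (∀ ν ν' : (C ⧸ lazySubspace k C) →ₗ[k] R,
      conv k ν ν' ∘ₗ (lazySubspace k C).mkQ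
        = conv k (ν ∘ₗ (lazySubspace k C).mkQ) (ν' ∘ₗ (lazySubspace k C).mkQ)) ∧
    (∀ ν : (C ⧸ lazySubspace k C) →ₗ[k] R,
      IsConvInvertible k ν ↔ IsConvInvertible k (ν ∘ₗ (lazySubspace k C).mkQ)) := by
  let π : C →ₗc[k] C ⧸ lazySubspace k C :=
    { (lazySubspace k C).mkQ with
      counit_comp := LinearMap.ext hcounit
      map_comp_comul := LinearMap.ext fun x => (hcomul x).symm }
  have hπ : Function.Surjective π := Submodule.mkQ_surjective _
  have hker : LinearMap.ker (π : C →ₗ[k] C ⧸ lazySubspace k C) = lazySubspace k C :=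
    Submodule.ker_mkQ _
  have : IsLocalHom (π.precompConv R) := π.isLocalHom_precompConv hπ hker
  refine ⟨fun μ => ?_, fun ν ν' => (LinearMap.cancel_right hπ).1, isLazy_comp hker.ge,
    fun μ hμ => hμ.exists_comp_eq hπ hker.le,
    fun ν ν' => LinearMap.convMul_comp_coalgHom_distrib (toConv ν) (toConv ν') π, fun ν => ?_⟩
  · rw [isLazy_iff_lazySubspace_le_ker, SetLike.le_def]
    rfl
  · rw [isConvInvertible_iff_isUnit, isConvInvertible_iff_isUnit]
    exact (isUnit_map_iff (π.precompConv R) (toConv ν)).symm
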